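/- arXiv:2605.02420 — 2 statements merged into one kernel-verified Lean document; each statement's English description precedes it below -/
import Mathlib

section
/- Let β ∈ (0,1), K > 0, c > 0, θ₁, θ₂ ≥ 0, r > 0, and let (r_n) be a sequence of positive numbers with r_n → r. Set f_n = θ₁ 1_{[0,r_n]} + θ₂ 1_{[0,r]} and f = (θ₁+θ₂) 1_{[0,r]}, and let v_n and v be the unique bounded nonnegative compactly supported Borel solutions of equation (E) with data f_n and f respectively. Then sup_{t≥0} |v_n(t) − v(t)| → 0 as n → ∞, and in particular ∫_0^∞ v_n(t) dt → ∫_0^∞ v(t) dt. -/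
/-!
The data `f_n`, `f` are bounded by `Θ = |θ₁| + |θ₂|` and vanish beyond some `R ≥ r, r_n`. Then
every solution vanishes beyond `R` (there the integrand of (E) is `≤ 0`) and is bounded by
`M = c Θ R^β`. Subtracting two equations and using that `x ↦ x^(1+β)` is Lipschitz on `[0, M]`
gives, with `I w (t) = ∫₀^∞ w(t+s) s^(β-1) ds` and a constant `L`,
`|v₁ - v₂| ≤ βc I |f₁ - f₂| + L I |v₁ - v₂|` on `[0, ∞)`.
Take `ρ` so large that `L Γ(β) ρ^(-β) ≤ 1/2`; since `∫₀^∞ e^(-ρs) s^(β-1) ds = Γ(β) ρ^(-β)`, the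
supremum `S` of `e^(ρt) |v₁ - v₂|(t)` satisfies `S ≤ e^(ρR) βc sup I |f₁ - f₂| + S / 2`.
For the step data `I |f_n - f| ≤ |θ₁| |r_n - r|^β / β`, so `v_n → v` uniformly, and the
integrals converge by dominated convergence on `[0, R]`.
-/

set_option autoImplicit false

open MeasureTheory Filter Set Real

/-- The Weyl fractional integral of order `β`, without its normalising factor `1 / Γ(β)`. -/
noncomputable def weylIntegral (β : ℝ) (g : ℝ → ℝ) (t : ℝ) : ℝ :=
  ∫ s in Ioi (0 : ℝ), g (t + s) * s ^ (β - 1)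

def WeylIntegrable (β : ℝ) (g : ℝ → ℝ) (t : ℝ) : Prop :=
  IntegrableOn (fun s => g (t + s) * s ^ (β - 1)) (Ioi 0)

structure IsAdmissible (Θ R : ℝ) (g : ℝ → ℝ) : Prop where
  measurable : Measurable g
  abs_le : ∀ u, |g u| ≤ Θ
  eq_zero_of_lt : ∀ u, R < u → g u = 0

structure IsBoundedSolution (β K c : ℝ) (f v : ℝ → ℝ) : Prop where
  measurable : Measurable v
  nonneg : ∀ t, 0 ≤ v t
  bddAbove : ∃ M, ∀ t, v t ≤ M
  eq : ∀ t ≥ (0 : ℝ), v t = β * c * weylIntegral β (fun u => f u - K * v u ^ (1 + β)) t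

section Kernel

variable {β : ℝ}

lemma integrableOn_rpow_sub_one_Ioc (hβ : 0 < β) (p q : ℝ) :
    IntegrableOn (fun s : ℝ => s ^ (β - 1)) (Ioc p q) := by
  rcases le_total p q with hpq | hqp
  · have h := intervalIntegral.intervalIntegrable_rpow' (a := p) (b := q)
      (by linarith : -1 < β - 1)
    rwa [intervalIntegrable_iff, uIoc_of_le hpq] at h
  · simp [Ioc_eq_empty_of_le hqp]

lemma integral_Ioc_rpow_sub_one_le (hβ : 0 < β) (hβ1 : β ≤ 1) {p q : ℝ} (hp : 0 ≤ p)
    (hpq : p ≤ q) : ∫ s in Ioc p q, s ^ (β - 1) ≤ (q - p) ^ β / β := by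
  rw [← intervalIntegral.integral_of_le hpq, integral_rpow (Or.inl (by linarith)),
    sub_add_cancel]
  have hsub : q ^ β ≤ p ^ β + (q - p) ^ β := by
    simpa using rpow_add_le_add_rpow hp (sub_nonneg.2 hpq) hβ.le hβ1
  exact div_le_div_of_nonneg_right (by linarith) hβ.le

lemma abs_rpow_sub_rpow_le {p M x y : ℝ} (hp : 1 ≤ p) (hx : x ∈ Icc 0 M) (hy : y ∈ Icc 0 M) :
    |x ^ p - y ^ p| ≤ p * M ^ (p - 1) * |x - y| := by
  have hderiv : ∀ z ∈ Icc 0 M,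
      HasDerivWithinAt (fun u : ℝ => u ^ p) (p * z ^ (p - 1)) (Icc 0 M) z :=
    fun z _ => (hasDerivAt_rpow_const (Or.inr hp)).hasDerivWithinAt
  have hbound : ∀ z ∈ Icc 0 M, ‖p * z ^ (p - 1)‖ ≤ p * M ^ (p - 1) := fun z hz => by
    rw [Real.norm_eq_abs, abs_of_nonneg (by have := rpow_nonneg hz.1 (p - 1); positivity)]
    gcongr
    · exact hz.1
    · exact hz.2
  simpa only [Real.norm_eq_abs] using
    (convex_Icc 0 M).norm_image_sub_le_of_norm_hasDerivWithin_le hderiv hbound hy hx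

lemma abs_sub_mul_rpow_sub_le {a₁ a₂ x₁ x₂ K M β : ℝ} (hK : 0 ≤ K) (hβ : 0 ≤ β)
    (hx₁ : x₁ ∈ Icc 0 M) (hx₂ : x₂ ∈ Icc 0 M) :
    |(a₁ - K * x₁ ^ (1 + β)) - (a₂ - K * x₂ ^ (1 + β))| ≤
      |a₁ - a₂| + K * ((1 + β) * M ^ β) * |x₁ - x₂| := by
  have hlip := abs_rpow_sub_rpow_le (p := 1 + β) (by linarith) hx₁ hx₂
  rw [add_sub_cancel_left] at hlip
  calc _ = |(a₁ - a₂) - K * (x₁ ^ (1 + β) - x₂ ^ (1 + β))| := by ring_nf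
    _ ≤ |a₁ - a₂| + K * |x₁ ^ (1 + β) - x₂ ^ (1 + β)| := by
        rw [← abs_of_nonneg hK, ← abs_mul, abs_of_nonneg hK]; exact abs_sub _ _
    _ ≤ |a₁ - a₂| + K * ((1 + β) * M ^ β) * |x₁ - x₂| := by
        rw [mul_assoc K]; gcongr

end Kernel

section WeylIntegral

variable {β t : ℝ} {g h : ℝ → ℝ}

lemma weylIntegral_const_mul (a : ℝ) :
    weylIntegral β (fun u => a * g u) t = a * weylIntegral β g t := by
  simp only [weylIntegral, mul_assoc, integral_const_mul]

lemma weylIntegral_sub (hg : WeylIntegrable β g t) (hh : WeylIntegrable β h t) :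
    weylIntegral β (fun u => g u - h u) t = weylIntegral β g t - weylIntegral β h t := by
  simp only [weylIntegral, sub_mul]
  exact integral_sub hg hh

lemma weylIntegral_add (hg : WeylIntegrable β g t) (hh : WeylIntegrable β h t) :
    weylIntegral β (fun u => g u + h u) t = weylIntegral β g t + weylIntegral β h t := by
  simp only [weylIntegral, add_mul]
  exact integral_add hg hh

lemma weylIntegral_mono (hg : WeylIntegrable β g t) (hh : WeylIntegrable β h t)
    (hgh : ∀ u, t < u → g u ≤ h u) : weylIntegral β g t ≤ weylIntegral β h t :=
  setIntegral_mono_on hg hh measurableSet_Ioi fun _ hs =>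
    mul_le_mul_of_nonneg_right (hgh _ (lt_add_of_pos_right t hs)) (rpow_nonneg (le_of_lt hs) _)

lemma weylIntegral_mono_of_nonneg (hg : ∀ u, t < u → 0 ≤ g u) (hh : WeylIntegrable β h t)
    (hgh : ∀ u, t < u → g u ≤ h u) : weylIntegral β g t ≤ weylIntegral β h t :=
  setIntegral_mono_of_nonneg
    (fun _ hs => mul_nonneg (hg _ (lt_add_of_pos_right t hs)) (rpow_nonneg (le_of_lt hs) _))
    (fun _ hs => mul_le_mul_of_nonneg_right (hgh _ (lt_add_of_pos_right t hs))
      (rpow_nonneg (le_of_lt hs) _)) hh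

lemma weylIntegral_nonneg (hg : ∀ u, t < u → 0 ≤ g u) : 0 ≤ weylIntegral β g t :=
  setIntegral_nonneg measurableSet_Ioi fun _ hs =>
    mul_nonneg (hg _ (lt_add_of_pos_right t hs)) (rpow_nonneg (le_of_lt hs) _)

lemma weylIntegral_nonpos (hg : ∀ u, t < u → g u ≤ 0) : weylIntegral β g t ≤ 0 :=
  setIntegral_nonpos measurableSet_Ioi fun _ hs =>
    mul_nonpos_of_nonpos_of_nonneg (hg _ (lt_add_of_pos_right t hs)) (rpow_nonneg (le_of_lt hs) _)

lemma abs_weylIntegral_le : |weylIntegral β g t| ≤ weylIntegral β (fun u => |g u|) t := by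
  refine abs_integral_le_integral_abs.trans_eq (setIntegral_congr_fun measurableSet_Ioi ?_)
  intro s hs
  simp only [abs_mul, abs_of_nonneg (rpow_nonneg (le_of_lt hs) (β - 1))]

end WeylIntegral

namespace IsAdmissible

variable {β Θ Θ' R : ℝ} {g h : ℝ → ℝ}

lemma weylIntegrable (hβ : 0 < β) (hg : IsAdmissible Θ R g) (t : ℝ) : WeylIntegrable β g t := by
  have hdom : IntegrableOn (fun s : ℝ => Θ * s ^ (β - 1)) (Ioc 0 (R - t)) :=
    (integrableOn_rpow_sub_one_Ioc hβ 0 (R - t)).const_mul Θ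
  refine Integrable.mono' (hdom.integrable_indicator measurableSet_Ioc).restrict
    ((hg.measurable.comp (measurable_const_add t)).mul (by fun_prop)).aestronglyMeasurable
    ((ae_restrict_iff' measurableSet_Ioi).2 (ae_of_all _ fun s hs => ?_))
  have hs0 : 0 ≤ s ^ (β - 1) := rpow_nonneg (le_of_lt hs) _
  by_cases hsR : s ≤ R - t
  · rw [indicator_of_mem (show s ∈ Ioc 0 (R - t) from ⟨hs, hsR⟩), norm_mul, Real.norm_eq_abs,
      Real.norm_eq_abs, abs_of_nonneg hs0]
    exact mul_le_mul_of_nonneg_right (hg.abs_le _) hs0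
  · rw [hg.eq_zero_of_lt _ (by linarith), zero_mul, norm_zero]
    exact indicator_nonneg (fun x hx => mul_nonneg ((abs_nonneg _).trans (hg.abs_le 0))
      (rpow_nonneg hx.1.le _)) _

lemma sub (hg : IsAdmissible Θ R g) (hh : IsAdmissible Θ' R h) :
    IsAdmissible (Θ + Θ') R (fun u => g u - h u) where
  measurable := hg.measurable.sub hh.measurable
  abs_le u := (abs_sub _ _).trans (add_le_add (hg.abs_le u) (hh.abs_le u))
  eq_zero_of_lt u hu := by rw [hg.eq_zero_of_lt u hu, hh.eq_zero_of_lt u hu, sub_zero]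

lemma add (hg : IsAdmissible Θ R g) (hh : IsAdmissible Θ' R h) :
    IsAdmissible (Θ + Θ') R (fun u => g u + h u) where
  measurable := hg.measurable.add hh.measurable
  abs_le u := (abs_add_le _ _).trans (add_le_add (hg.abs_le u) (hh.abs_le u))
  eq_zero_of_lt u hu := by rw [hg.eq_zero_of_lt u hu, hh.eq_zero_of_lt u hu, add_zero]

lemma const_mul (hg : IsAdmissible Θ R g) (a : ℝ) :
    IsAdmissible (|a| * Θ) R (fun u => a * g u) where
  measurable := hg.measurable.const_mul a
  abs_le u := by rw [abs_mul]; exact mul_le_mul_of_nonneg_left (hg.abs_le u) (abs_nonneg a)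
  eq_zero_of_lt u hu := by rw [hg.eq_zero_of_lt u hu, mul_zero]

lemma abs (hg : IsAdmissible Θ R g) : IsAdmissible Θ R (fun u => |g u|) where
  measurable := hg.measurable.abs
  abs_le u := by rw [abs_abs]; exact hg.abs_le u
  eq_zero_of_lt u hu := by rw [hg.eq_zero_of_lt u hu, abs_zero]

end IsAdmissible

section StepData

variable {β : ℝ}

lemma isAdmissible_indicator_one {s : Set ℝ} {R : ℝ} (hs : MeasurableSet s) (hsR : s ⊆ Iic R) :
    IsAdmissible 1 R (s.indicator fun _ => 1) where
  measurable := measurable_const.indicator hs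
  abs_le u := by by_cases hu : u ∈ s <;> simp [hu]
  eq_zero_of_lt u hu := indicator_of_notMem (fun hus => (hsR hus).not_gt hu) _

lemma isAdmissible_step (θ₁ θ₂ : ℝ) {a b R : ℝ} (ha : a ≤ R) (hb : b ≤ R) :
    IsAdmissible (|θ₁| + |θ₂|) R (fun u => θ₁ * (Icc 0 a).indicator (fun _ => 1) u +
      θ₂ * (Icc 0 b).indicator (fun _ => 1) u) := by
  simpa only [mul_one] using
    ((isAdmissible_indicator_one measurableSet_Icc fun _ hu => hu.2.trans ha).const_mul θ₁).add
      ((isAdmissible_indicator_one measurableSet_Icc fun _ hu => hu.2.trans hb).const_mul θ₂)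

lemma weylIntegral_indicator_Ioc_le (hβ : 0 < β) (hβ1 : β ≤ 1) {a b : ℝ} (hab : a ≤ b)
    (t : ℝ) : weylIntegral β ((Ioc a b).indicator fun _ => 1) t ≤ (b - a) ^ β / β := by
  set p := max (a - t) 0
  set q := max (b - t) 0
  have hp : 0 ≤ p := le_max_right _ _
  have hpq : p ≤ q := max_le_max (by linarith) le_rfl
  have hqp : q - p ≤ b - a := (le_abs_self _).trans <| (abs_max_sub_max_le_abs _ _ _).trans_eq <|
    by rw [sub_sub_sub_cancel_right, abs_of_nonneg (sub_nonneg.2 hab)]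
  have hshift : ∀ s ∈ Ioi (0 : ℝ), (Ioc a b).indicator (fun _ => (1 : ℝ)) (t + s) * s ^ (β - 1)
      ≤ (Ioc p q).indicator (fun s => s ^ (β - 1)) s := by
    intro s hs
    by_cases hts : t + s ∈ Ioc a b
    · have hsI : s ∈ Ioc p q :=
        ⟨max_lt (by linarith [hts.1]) hs, le_max_of_le_left (by linarith [hts.2])⟩
      rw [indicator_of_mem hts, indicator_of_mem hsI, one_mul]
    · rw [indicator_of_notMem hts, zero_mul]
      exact indicator_nonneg (fun s hs => rpow_nonneg (hp.trans hs.1.le) _) s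
  have hint : IntegrableOn ((Ioc p q).indicator fun s => s ^ (β - 1)) (Ioi 0) :=
    ((integrableOn_rpow_sub_one_Ioc hβ p q).integrable_indicator measurableSet_Ioc).integrableOn
  calc weylIntegral β ((Ioc a b).indicator fun _ => 1) t
      ≤ ∫ s in Ioi 0, (Ioc p q).indicator (fun s => s ^ (β - 1)) s :=
        setIntegral_mono_of_nonneg
          (fun s hs => mul_nonneg (indicator_nonneg (fun _ _ => zero_le_one) _)
            (rpow_nonneg (le_of_lt hs) _)) hshift hint
    _ = ∫ s in Ioc p q, s ^ (β - 1) := by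
        rw [setIntegral_indicator measurableSet_Ioc,
          inter_eq_right.2 (show Ioc p q ⊆ Ioi 0 from fun s hs => hp.trans_lt hs.1)]
    _ ≤ (q - p) ^ β / β := integral_Ioc_rpow_sub_one_le hβ hβ1 hp hpq
    _ ≤ (b - a) ^ β / β :=
        div_le_div_of_nonneg_right (rpow_le_rpow (sub_nonneg.2 hpq) hqp hβ.le) hβ.le

open scoped symmDiff in
lemma weylIntegral_abs_indicator_Icc_sub_le (hβ : 0 < β) (hβ1 : β ≤ 1) (a b t : ℝ) :
    weylIntegral β (fun u => |(Icc 0 a).indicator (fun _ => (1 : ℝ)) u -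
      (Icc 0 b).indicator (fun _ => 1) u|) t ≤ |a - b| ^ β / β := by
  have hsub : Icc 0 a ∆ Icc 0 b ⊆ Ioc (min a b) (max a b) := by
    rintro u (⟨⟨hu0, hua⟩, hub⟩ | ⟨⟨hu0, hub⟩, hua⟩)
    · exact ⟨min_lt_of_right_lt (lt_of_not_ge fun h => hub ⟨hu0, h⟩), le_max_of_le_left hua⟩
    · exact ⟨min_lt_of_left_lt (lt_of_not_ge fun h => hua ⟨hu0, h⟩), le_max_of_le_right hub⟩
  have hind := isAdmissible_indicator_one measurableSet_Ioc
    (Ioc_subset_Iic_self (a := min a b) (b := max a b))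
  calc _ ≤ weylIntegral β ((Ioc (min a b) (max a b)).indicator fun _ => 1) t := by
        refine weylIntegral_mono_of_nonneg (fun _ _ => abs_nonneg _) (hind.weylIntegrable hβ t)
          fun u _ => ?_
        rw [← abs_indicator_symmDiff, abs_of_nonneg (indicator_nonneg (fun _ _ => zero_le_one) _)]
        exact indicator_le_indicator_of_subset hsub (fun _ => zero_le_one) u
    _ ≤ (max a b - min a b) ^ β / β := weylIntegral_indicator_Ioc_le hβ hβ1 min_le_max t
    _ = |a - b| ^ β / β := by rw [max_sub_min_eq_abs']

lemma weylIntegral_abs_step_sub_le (hβ : 0 < β) (hβ1 : β ≤ 1) (θ₁ θ₂ a b t : ℝ) :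
    weylIntegral β (fun u => |(θ₁ * (Icc 0 a).indicator (fun _ => 1) u +
      θ₂ * (Icc 0 b).indicator (fun _ => 1) u) - (θ₁ + θ₂) * (Icc 0 b).indicator (fun _ => 1) u|) t
      ≤ |θ₁| * (|a - b| ^ β / β) := by
  have hstep : (fun u => |(θ₁ * (Icc 0 a).indicator (fun _ => 1) u +
      θ₂ * (Icc 0 b).indicator (fun _ => 1) u) - (θ₁ + θ₂) * (Icc 0 b).indicator (fun _ => 1) u|)
      = fun u => |θ₁| * |(Icc 0 a).indicator (fun _ => (1 : ℝ)) u -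
        (Icc 0 b).indicator (fun _ => 1) u| :=
    funext fun u => by rw [← abs_mul]; congr 1; ring
  rw [hstep, weylIntegral_const_mul]
  gcongr
  exact weylIntegral_abs_indicator_Icc_sub_le hβ hβ1 a b t

end StepData

section Gronwall

variable {β : ℝ}

lemma weylIntegral_le_of_le_exp (hβ : 0 < β) {w : ℝ → ℝ} {ρ S t : ℝ} (hρ : 0 < ρ)
    (hw0 : ∀ u, t < u → 0 ≤ w u) (hwS : ∀ u, t < u → w u ≤ exp (-(ρ * u)) * S) :
    weylIntegral β w t ≤ exp (-(ρ * t)) * S * ((1 / ρ) ^ β * Gamma β) := by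
  have hGamma : ∫ s in Ioi (0 : ℝ), s ^ (β - 1) * exp (-(ρ * s)) = (1 / ρ) ^ β * Gamma β :=
    integral_rpow_mul_exp_neg_mul_Ioi hβ hρ
  have hint : IntegrableOn (fun s : ℝ => s ^ (β - 1) * exp (-(ρ * s))) (Ioi 0) :=
    Integrable.of_integral_ne_zero <| by
      rw [hGamma]; exact (mul_pos (rpow_pos_of_pos (by positivity) _) (Gamma_pos_of_pos hβ)).ne'
  rw [← hGamma, ← integral_const_mul]
  refine setIntegral_mono_of_nonneg (fun s hs => ?_) (fun s hs => ?_) (hint.const_mul _)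
  · exact mul_nonneg (hw0 _ (lt_add_of_pos_right t hs)) (rpow_nonneg (le_of_lt hs) _)
  · calc w (t + s) * s ^ (β - 1) ≤ exp (-(ρ * (t + s))) * S * s ^ (β - 1) :=
          mul_le_mul_of_nonneg_right (hwS _ (lt_add_of_pos_right t hs))
            (rpow_nonneg (le_of_lt hs) _)
      _ = exp (-(ρ * t)) * S * (s ^ (β - 1) * exp (-(ρ * s))) := by
          rw [show -(ρ * (t + s)) = -(ρ * t) + -(ρ * s) by ring, exp_add]; ring

lemma exists_rpow_inv_mul_Gamma_le (hβ : 0 < β) (L : ℝ) :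
    ∃ ρ, 0 < ρ ∧ L * ((1 / ρ) ^ β * Gamma β) ≤ 1 / 2 := by
  have hlim : Tendsto (fun ρ : ℝ => L * ((1 / ρ) ^ β * Gamma β)) atTop (nhds 0) := by
    have h := ((tendsto_rpow_neg_atTop hβ).mul_const (Gamma β)).const_mul L
    rw [zero_mul, mul_zero] at h
    refine h.congr' ((eventually_gt_atTop 0).mono fun ρ hρ => ?_)
    dsimp only
    rw [one_div, inv_rpow hρ.le, rpow_neg hρ.le]
  obtain ⟨ρ, hρ, hρ0⟩ := ((hlim.eventually (ge_mem_nhds (by norm_num : (0 : ℝ) < 1 / 2))).and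
    (eventually_gt_atTop 0)).exists
  exact ⟨ρ, hρ0, hρ⟩

lemma exp_mul_le_of_le_add_weylIntegral (hβ : 0 < β) {w : ℝ → ℝ} {L ρ R S a u : ℝ}
    (hL : 0 ≤ L) (hρ : 0 < ρ) (ha : 0 ≤ a) (hw0 : ∀ v, 0 ≤ w v)
    (hwS : ∀ v, 0 ≤ v → w v ≤ exp (-(ρ * v)) * S) (hu : 0 ≤ u) (huR : u ≤ R)
    (hineq : w u ≤ a + L * weylIntegral β w u) :
    exp (ρ * u) * w u ≤ exp (ρ * R) * a + L * ((1 / ρ) ^ β * Gamma β) * S := by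
  have hweyl := weylIntegral_le_of_le_exp hβ hρ (fun v _ => hw0 v)
    (fun v hv => hwS v (le_trans hu hv.le))
  calc exp (ρ * u) * w u ≤ exp (ρ * u) * (a + L * weylIntegral β w u) :=
        mul_le_mul_of_nonneg_left hineq (exp_pos _).le
    _ = exp (ρ * u) * a + L * (exp (ρ * u) * weylIntegral β w u) := by ring
    _ ≤ exp (ρ * R) * a + L * ((1 / ρ) ^ β * Gamma β * S) := by
        refine add_le_add (by gcongr) (mul_le_mul_of_nonneg_left ?_ hL)
        calc exp (ρ * u) * weylIntegral β w u
            ≤ exp (ρ * u) * (exp (-(ρ * u)) * S * ((1 / ρ) ^ β * Gamma β)) := by gcongr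
          _ = (1 / ρ) ^ β * Gamma β * S := by rw [exp_neg]; field_simp
    _ = exp (ρ * R) * a + L * ((1 / ρ) ^ β * Gamma β) * S := by ring

theorem exists_le_mul_of_le_add_weylIntegral (hβ : 0 < β) {L : ℝ} (hL : 0 ≤ L) (R : ℝ) :
    ∃ C, ∀ (w : ℝ → ℝ) (B a : ℝ), IsAdmissible B R w → (∀ u, 0 ≤ w u) → 0 ≤ a →
      (∀ t, 0 ≤ t → w t ≤ a + L * weylIntegral β w t) → ∀ t, 0 ≤ t → w t ≤ C * a := by
  obtain ⟨ρ, hρ, hsmall⟩ := exists_rpow_inv_mul_Gamma_le hβ L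
  refine ⟨2 * exp (ρ * R), fun w B a hw hw0 ha hineq => ?_⟩
  set W : ℝ → ℝ := fun u => exp (ρ * u) * w u
  have hW_le : ∀ u, 0 ≤ u → ∀ A, 0 ≤ A → (u ≤ R → W u ≤ A) → W u ≤ A := by
    intro u _ A hA hle
    by_cases huR : u ≤ R
    · exact hle huR
    · simp only [W, hw.eq_zero_of_lt u (not_le.1 huR), mul_zero, hA]
  have hbdd : BddAbove (W '' Ici 0) := by
    refine ⟨exp (ρ * R) * B, forall_mem_image.2 fun u hu => hW_le u hu _ ?_ fun huR => ?_⟩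
    · exact mul_nonneg (exp_pos _).le ((abs_nonneg _).trans (hw.abs_le 0))
    · exact mul_le_mul (exp_le_exp.2 (by gcongr)) ((le_abs_self _).trans (hw.abs_le u))
        (hw0 u) (exp_pos _).le
  set S := sSup (W '' Ici 0)
  have hWS : ∀ u, 0 ≤ u → W u ≤ S := fun u hu => le_csSup hbdd (mem_image_of_mem W hu)
  have hS0 : 0 ≤ S := (mul_nonneg (exp_pos _).le (hw0 0)).trans (hWS 0 le_rfl)
  have hw_exp : ∀ u, 0 ≤ u → w u ≤ exp (-(ρ * u)) * S := fun u hu =>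
    calc w u = exp (-(ρ * u)) * W u := by
          rw [← mul_assoc, ← exp_add, neg_add_cancel, exp_zero, one_mul]
      _ ≤ exp (-(ρ * u)) * S := mul_le_mul_of_nonneg_left (hWS u hu) (exp_pos _).le
  have hS : S ≤ exp (ρ * R) * a + S / 2 := by
    refine csSup_le (nonempty_Ici.image W) (forall_mem_image.2 fun u hu => ?_)
    refine hW_le u hu _ (by positivity) fun huR => ?_
    calc W u ≤ exp (ρ * R) * a + L * ((1 / ρ) ^ β * Gamma β) * S :=
          exp_mul_le_of_le_add_weylIntegral hβ hL hρ ha hw0 hw_exp hu huR (hineq u hu)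
      _ ≤ exp (ρ * R) * a + S / 2 := by nlinarith
  intro t ht
  calc w t ≤ W t := le_mul_of_one_le_left (hw0 t) (one_le_exp (by positivity))
    _ ≤ S := hWS t ht
    _ ≤ 2 * exp (ρ * R) * a := by linarith

end Gronwall

namespace IsBoundedSolution

variable {β K c Θ R : ℝ} {f v : ℝ → ℝ}

lemma eq_zero_of_lt (hv : IsBoundedSolution β K c f v) (hβ : 0 ≤ β) (hK : 0 ≤ K) (hc : 0 ≤ c)
    (hR : 0 ≤ R) (hf : ∀ u, R < u → f u = 0) {t : ℝ} (ht : R < t) : v t = 0 := by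
  refine le_antisymm ?_ (hv.nonneg t)
  rw [hv.eq t (hR.trans ht.le)]
  refine mul_nonpos_of_nonneg_of_nonpos (by positivity) (weylIntegral_nonpos fun u hu => ?_)
  rw [hf u (ht.trans hu), zero_sub, neg_nonpos]
  exact mul_nonneg hK (rpow_nonneg (hv.nonneg u) _)

lemma exists_isAdmissible (hv : IsBoundedSolution β K c f v) (hβ : 0 ≤ β) (hK : 0 ≤ K)
    (hc : 0 ≤ c) (hR : 0 ≤ R) (hf : ∀ u, R < u → f u = 0) : ∃ B, IsAdmissible B R v := by
  obtain ⟨B, hB⟩ := hv.bddAbove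
  exact ⟨B, hv.measurable, fun u => (abs_of_nonneg (hv.nonneg u)).trans_le (hB u),
    fun u hu => hv.eq_zero_of_lt hβ hK hc hR hf hu⟩

lemma exists_isAdmissible_sub (hv : IsBoundedSolution β K c f v) (hβ : 0 ≤ β) (hK : 0 ≤ K)
    (hc : 0 ≤ c) (hR : 0 ≤ R) (hf : IsAdmissible Θ R f) :
    ∃ B, IsAdmissible B R (fun u => f u - K * v u ^ (1 + β)) := by
  obtain ⟨B, hB⟩ := hv.exists_isAdmissible hβ hK hc hR hf.eq_zero_of_lt
  refine ⟨Θ + K * B ^ (1 + β),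
    ⟨hf.measurable.sub ((hv.measurable.pow_const _).const_mul K), fun u => ?_, fun u hu => ?_⟩⟩
  · have hvB : v u ^ (1 + β) ≤ B ^ (1 + β) :=
      rpow_le_rpow (hv.nonneg u) ((le_abs_self _).trans (hB.abs_le u)) (by linarith)
    have hv0 : 0 ≤ K * v u ^ (1 + β) := mul_nonneg hK (rpow_nonneg (hv.nonneg u) _)
    calc |f u - K * v u ^ (1 + β)| ≤ |f u| + |K * v u ^ (1 + β)| := abs_sub _ _
      _ ≤ Θ + K * B ^ (1 + β) := by
          rw [abs_of_nonneg hv0]; gcongr; exact hf.abs_le u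
  · rw [hf.eq_zero_of_lt u hu, hB.eq_zero_of_lt u hu, zero_rpow (by linarith), mul_zero, sub_zero]

lemma le_mul_rpow (hv : IsBoundedSolution β K c f v) (hβ : 0 < β) (hβ1 : β ≤ 1) (hK : 0 ≤ K)
    (hc : 0 ≤ c) (hR : 0 ≤ R) (hf : IsAdmissible Θ R f) {t : ℝ} (ht : 0 ≤ t) :
    v t ≤ c * Θ * R ^ β := by
  obtain ⟨B, hg⟩ := hv.exists_isAdmissible_sub hβ.le hK hc hR hf
  have hΘ : 0 ≤ Θ := (abs_nonneg _).trans (hf.abs_le 0)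
  have hind := isAdmissible_indicator_one measurableSet_Ioc (Ioc_subset_Iic_self (a := 0) (b := R))
  have hweyl : weylIntegral β (fun u => f u - K * v u ^ (1 + β)) t ≤ Θ * (R ^ β / β) :=
    calc _ ≤ weylIntegral β (fun u => Θ * (Ioc 0 R).indicator (fun _ => 1) u) t := by
          refine weylIntegral_mono (hg.weylIntegrable hβ t)
            ((hind.const_mul Θ).weylIntegrable hβ t) fun u hu => ?_
          have hKv : 0 ≤ K * v u ^ (1 + β) := mul_nonneg hK (rpow_nonneg (hv.nonneg u) _)
          by_cases huR : u ≤ R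
          · rw [indicator_of_mem (show u ∈ Ioc 0 R from ⟨ht.trans_lt hu, huR⟩), mul_one]
            linarith [le_abs_self (f u), hf.abs_le u]
          · rw [hf.eq_zero_of_lt u (not_le.1 huR), hind.eq_zero_of_lt u (not_le.1 huR)]
            linarith
      _ = Θ * weylIntegral β ((Ioc 0 R).indicator fun _ => 1) t := weylIntegral_const_mul Θ
      _ ≤ Θ * (R ^ β / β) := by
          gcongr; simpa using weylIntegral_indicator_Ioc_le hβ hβ1 hR t
  calc v t = β * c * weylIntegral β (fun u => f u - K * v u ^ (1 + β)) t := hv.eq t ht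
    _ ≤ β * c * (Θ * (R ^ β / β)) := by gcongr
    _ = c * Θ * R ^ β := by field_simp

lemma abs_sub_le {f₁ f₂ v₁ v₂ : ℝ → ℝ} (hv₁ : IsBoundedSolution β K c f₁ v₁)
    (hv₂ : IsBoundedSolution β K c f₂ v₂) (hβ : 0 < β) (hβ1 : β ≤ 1) (hK : 0 ≤ K) (hc : 0 ≤ c)
    (hR : 0 ≤ R) (hf₁ : IsAdmissible Θ R f₁) (hf₂ : IsAdmissible Θ R f₂) {t : ℝ} (ht : 0 ≤ t) :
    |v₁ t - v₂ t| ≤ β * c * weylIntegral β (fun u => |f₁ u - f₂ u|) t +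
      β * c * (K * ((1 + β) * (c * Θ * R ^ β) ^ β)) *
        weylIntegral β (fun u => |v₁ u - v₂ u|) t := by
  set L := K * ((1 + β) * (c * Θ * R ^ β) ^ β)
  obtain ⟨B₁, hg₁⟩ := hv₁.exists_isAdmissible_sub hβ.le hK hc hR hf₁
  obtain ⟨B₂, hg₂⟩ := hv₂.exists_isAdmissible_sub hβ.le hK hc hR hf₂
  obtain ⟨C₁, hC₁⟩ := hv₁.exists_isAdmissible hβ.le hK hc hR hf₁.eq_zero_of_lt
  obtain ⟨C₂, hC₂⟩ := hv₂.exists_isAdmissible hβ.le hK hc hR hf₂.eq_zero_of_lt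
  have hdf := (hf₁.sub hf₂).abs
  have hdv := (hC₁.sub hC₂).abs.const_mul L
  have hpt : ∀ u, t < u → |(f₁ u - K * v₁ u ^ (1 + β)) - (f₂ u - K * v₂ u ^ (1 + β))| ≤
      |f₁ u - f₂ u| + L * |v₁ u - v₂ u| := fun u hu =>
    abs_sub_mul_rpow_sub_le hK hβ.le
      ⟨hv₁.nonneg u, hv₁.le_mul_rpow hβ hβ1 hK hc hR hf₁ (ht.trans hu.le)⟩
      ⟨hv₂.nonneg u, hv₂.le_mul_rpow hβ hβ1 hK hc hR hf₂ (ht.trans hu.le)⟩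
  calc |v₁ t - v₂ t|
      = β * c * |weylIntegral β
          (fun u => (f₁ u - K * v₁ u ^ (1 + β)) - (f₂ u - K * v₂ u ^ (1 + β))) t| := by
        rw [hv₁.eq t ht, hv₂.eq t ht, ← mul_sub,
          weylIntegral_sub (hg₁.weylIntegrable hβ t) (hg₂.weylIntegrable hβ t), abs_mul,
          abs_of_nonneg (by positivity)]
    _ ≤ β * c * weylIntegral β (fun u => |f₁ u - f₂ u| + L * |v₁ u - v₂ u|) t := by
        gcongr
        exact abs_weylIntegral_le.trans (weylIntegral_mono_of_nonneg (fun _ _ => abs_nonneg _)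
          ((hdf.add hdv).weylIntegrable hβ t) hpt)
    _ = _ := by
        rw [weylIntegral_add (hdf.weylIntegrable hβ t) (hdv.weylIntegrable hβ t),
          weylIntegral_const_mul]
        ring

end IsBoundedSolution

theorem exists_abs_sub_le_mul_of_isBoundedSolution {β K c Θ R : ℝ} (hβ : 0 < β) (hβ1 : β ≤ 1)
    (hK : 0 ≤ K) (hc : 0 ≤ c) (hΘ : 0 ≤ Θ) (hR : 0 ≤ R) :
    ∃ C, ∀ (f₁ f₂ v₁ v₂ : ℝ → ℝ) (D : ℝ), IsAdmissible Θ R f₁ → IsAdmissible Θ R f₂ →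
      IsBoundedSolution β K c f₁ v₁ → IsBoundedSolution β K c f₂ v₂ →
      (∀ t, 0 ≤ t → weylIntegral β (fun u => |f₁ u - f₂ u|) t ≤ D) →
      ∀ t, 0 ≤ t → |v₁ t - v₂ t| ≤ C * D := by
  obtain ⟨C, hC⟩ := exists_le_mul_of_le_add_weylIntegral hβ
    (L := β * c * (K * ((1 + β) * (c * Θ * R ^ β) ^ β))) (by positivity) R
  refine ⟨C * (β * c), fun f₁ f₂ v₁ v₂ D hf₁ hf₂ hv₁ hv₂ hD t ht => ?_⟩
  obtain ⟨B₁, hB₁⟩ := hv₁.exists_isAdmissible hβ.le hK hc hR hf₁.eq_zero_of_lt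
  obtain ⟨B₂, hB₂⟩ := hv₂.exists_isAdmissible hβ.le hK hc hR hf₂.eq_zero_of_lt
  have hD0 : 0 ≤ D := (weylIntegral_nonneg fun _ _ => abs_nonneg _).trans (hD 0 le_rfl)
  rw [mul_assoc]
  refine hC _ _ _ (hB₁.sub hB₂).abs (fun _ => abs_nonneg _) (by positivity) (fun s hs => ?_) t ht
  grw [hv₁.abs_sub_le hv₂ hβ hβ1 hK hc hR hf₁ hf₂ hs, hD s hs]

lemma tendsto_integral_Ioi_of_tendsto {F : ℕ → ℝ → ℝ} {f : ℝ → ℝ} {M R : ℝ}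
    (hF : ∀ n, Measurable (F n)) (hbound : ∀ n t, 0 ≤ t → |F n t| ≤ M)
    (hsupp : ∀ n t, R < t → F n t = 0)
    (hlim : ∀ t, 0 ≤ t → Tendsto (fun n => F n t) atTop (nhds (f t))) :
    Tendsto (fun n => ∫ t in Ioi 0, F n t) atTop (nhds (∫ t in Ioi 0, f t)) := by
  have hM : IntegrableOn (fun _ : ℝ => M) (Ioc 0 R) := integrableOn_const measure_Ioc_lt_top.ne
  refine tendsto_integral_of_dominated_convergence ((Ioc 0 R).indicator fun _ => M)
    (fun n => (hF n).aestronglyMeasurable) (hM.integrable_indicator measurableSet_Ioc).restrict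
    (fun n => (ae_restrict_iff' measurableSet_Ioi).2 (ae_of_all _ fun t ht => ?_))
    ((ae_restrict_iff' measurableSet_Ioi).2 (ae_of_all _ fun t ht => hlim t (le_of_lt ht)))
  rw [Real.norm_eq_abs]
  by_cases htR : t ≤ R
  · rw [indicator_of_mem (show t ∈ Ioc 0 R from ⟨ht, htR⟩)]
    exact hbound n t (le_of_lt ht)
  · rw [hsupp n t (not_le.1 htR), abs_zero]
    exact indicator_nonneg (fun _ _ => (abs_nonneg _).trans (hbound n 0 le_rfl)) t

theorem stmt18_general
    (β K c : ℝ) (hβ : β ∈ Ioo (0 : ℝ) 1) (hK : 0 < K) (hc : 0 < c)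
    (θ₁ θ₂ r : ℝ) (hr : 0 < r)
    (rn : ℕ → ℝ)
    (hrn_lim : Tendsto rn atTop (nhds r))
    (vn : ℕ → ℝ → ℝ) (v : ℝ → ℝ)
    (hvn_meas : ∀ n, Measurable (vn n))
    (hvn_nonneg : ∀ n t, 0 ≤ vn n t)
    (hvn_bdd : ∀ n, ∃ M, ∀ t, vn n t ≤ M)
    (hvn_eq : ∀ n, ∀ t ≥ (0 : ℝ), vn n t =
      β * c * ∫ s in Set.Ioi (0 : ℝ),
        ((θ₁ * Set.indicator (Icc (0 : ℝ) (rn n)) (fun _ => (1 : ℝ)) (t + s) +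
          θ₂ * Set.indicator (Icc (0 : ℝ) r) (fun _ => (1 : ℝ)) (t + s)) -
          K * vn n (t + s) ^ (1 + β)) * s ^ (β - 1))
    (hv_meas : Measurable v) (hv_nonneg : ∀ t, 0 ≤ v t)
    (hv_bdd : ∃ M, ∀ t, v t ≤ M)
    (hv_eq : ∀ t ≥ (0 : ℝ), v t =
      β * c * ∫ s in Set.Ioi (0 : ℝ),
        ((θ₁ + θ₂) * Set.indicator (Icc (0 : ℝ) r) (fun _ => (1 : ℝ)) (t + s) -
          K * v (t + s) ^ (1 + β)) * s ^ (β - 1)) :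
    (∀ ε > (0 : ℝ), ∃ N : ℕ, ∀ n ≥ N, ∀ t ≥ (0 : ℝ), |vn n t - v t| ≤ ε) ∧
    Tendsto (fun n => ∫ t in Set.Ioi (0 : ℝ), vn n t) atTop
      (nhds (∫ t in Set.Ioi (0 : ℝ), v t)) := by
  obtain ⟨hβ0, hβ1⟩ := hβ
  obtain ⟨R, hrR, hrnR⟩ : ∃ R, r ≤ R ∧ ∀ n, rn n ≤ R := by
    obtain ⟨R, hR⟩ := hrn_lim.bddAbove_range
    exact ⟨max R r, le_max_right _ _, fun n => (hR (mem_range_self n)).trans (le_max_left _ _)⟩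
  have hR : 0 ≤ R := hr.le.trans hrR
  have hfn := fun n => isAdmissible_step θ₁ θ₂ (hrnR n) hrR
  have hf : IsAdmissible (|θ₁| + |θ₂|) R
      (fun u => (θ₁ + θ₂) * (Icc 0 r).indicator (fun _ => 1) u) := by
    simpa only [add_mul] using isAdmissible_step θ₁ θ₂ hrR hrR
  have hsoln : ∀ n, IsBoundedSolution β K c (fun u => θ₁ * (Icc 0 (rn n)).indicator (fun _ => 1) u +
      θ₂ * (Icc 0 r).indicator (fun _ => 1) u) (vn n) :=
    fun n => ⟨hvn_meas n, hvn_nonneg n, hvn_bdd n, hvn_eq n⟩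
  have hsol : IsBoundedSolution β K c (fun u => (θ₁ + θ₂) * (Icc 0 r).indicator (fun _ => 1) u) v :=
    ⟨hv_meas, hv_nonneg, hv_bdd, hv_eq⟩
  obtain ⟨C, hC⟩ := exists_abs_sub_le_mul_of_isBoundedSolution hβ0 hβ1.le hK.le hc.le
    (by positivity : 0 ≤ |θ₁| + |θ₂|) hR
  have hdist : ∀ n, ∀ t, 0 ≤ t → |vn n t - v t| ≤ C * (|θ₁| * (|rn n - r| ^ β / β)) :=
    fun n => hC _ _ _ _ _ (hfn n) hf (hsoln n) hsol
      fun t _ => weylIntegral_abs_step_sub_le hβ0 hβ1.le θ₁ θ₂ (rn n) r t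
  have hlim : Tendsto (fun n => C * (|θ₁| * (|rn n - r| ^ β / β))) atTop (nhds 0) := by
    simpa [zero_rpow hβ0.ne'] using ((((hrn_lim.sub_const r).abs.rpow_const
      (Or.inr hβ0.le)).div_const β).const_mul |θ₁|).const_mul C
  refine ⟨fun ε hε => ?_, ?_⟩
  · obtain ⟨N, hN⟩ := eventually_atTop.1 (hlim.eventually (ge_mem_nhds hε))
    exact ⟨N, fun n hn t ht => (hdist n t ht).trans (hN n hn)⟩
  refine tendsto_integral_Ioi_of_tendsto (M := c * (|θ₁| + |θ₂|) * R ^ β) hvn_meas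
    (fun n t ht => ?_)
    (fun n t ht => (hsoln n).eq_zero_of_lt hβ0.le hK.le hc.le hR (hfn n).eq_zero_of_lt ht)
    fun t ht => tendsto_iff_dist_tendsto_zero.2 <| squeeze_zero (fun _ => dist_nonneg)
      (fun n => (hdist n t ht).trans_eq' (Real.dist_eq _ _)) hlim
  rw [abs_of_nonneg (hvn_nonneg n t)]
  exact (hsoln n).le_mul_rpow hβ0 hβ1.le hK.le hc.le hR (hfn n) ht

/-- continuity of solutions of equation (E) in the data. With
`f_n = θ₁ 1_{[0,r_n]} + θ₂ 1_{[0,r]}`, `f = (θ₁+θ₂) 1_{[0,r]}`, `r_n → r`,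
and `v_n`, `v` the (unique) bounded nonnegative compactly supported Borel
solutions of (E) with data `f_n` and `f`, one has
`sup_{t≥0} |v_n(t) - v(t)| → 0`, and in particular
`∫_0^∞ v_n(t) dt → ∫_0^∞ v(t) dt`. -/
theorem stmt18
    (β K c : ℝ) (hβ : β ∈ Ioo (0 : ℝ) 1) (hK : 0 < K) (hc : 0 < c)
    (θ₁ θ₂ r : ℝ) (hθ₁ : 0 ≤ θ₁) (hθ₂ : 0 ≤ θ₂) (hr : 0 < r)
    (rn : ℕ → ℝ) (hrn_pos : ∀ n, 0 < rn n)
    (hrn_lim : Tendsto rn atTop (nhds r))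
    (vn : ℕ → ℝ → ℝ) (v : ℝ → ℝ)
    (hvn_meas : ∀ n, Measurable (vn n))
    (hvn_nonneg : ∀ n t, 0 ≤ vn n t)
    (hvn_bdd : ∀ n, ∃ M, ∀ t, vn n t ≤ M)
    (hvn_supp : ∀ n, ∃ b : ℝ, ∀ t, b < t → vn n t = 0)
    (hvn_eq : ∀ n, ∀ t ≥ (0 : ℝ), vn n t =
      β * c * ∫ s in Set.Ioi (0 : ℝ),
        ((θ₁ * Set.indicator (Icc (0 : ℝ) (rn n)) (fun _ => (1 : ℝ)) (t + s) +
          θ₂ * Set.indicator (Icc (0 : ℝ) r) (fun _ => (1 : ℝ)) (t + s)) -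
          K * vn n (t + s) ^ (1 + β)) * s ^ (β - 1))
    (hv_meas : Measurable v) (hv_nonneg : ∀ t, 0 ≤ v t)
    (hv_bdd : ∃ M, ∀ t, v t ≤ M)
    (hv_supp : ∃ b : ℝ, ∀ t, b < t → v t = 0)
    (hv_eq : ∀ t ≥ (0 : ℝ), v t =
      β * c * ∫ s in Set.Ioi (0 : ℝ),
        ((θ₁ + θ₂) * Set.indicator (Icc (0 : ℝ) r) (fun _ => (1 : ℝ)) (t + s) -
          K * v (t + s) ^ (1 + β)) * s ^ (β - 1)) :
    (∀ ε > (0 : ℝ), ∃ N : ℕ, ∀ n ≥ N, ∀ t ≥ (0 : ℝ), |vn n t - v t| ≤ ε) ∧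
    Tendsto (fun n => ∫ t in Set.Ioi (0 : ℝ), vn n t) atTop
      (nhds (∫ t in Set.Ioi (0 : ℝ), v t)) :=
  stmt18_general β K c hβ hK hc θ₁ θ₂ r hr rn hrn_lim vn v hvn_meas hvn_nonneg hvn_bdd hvn_eq
    hv_meas hv_nonneg hv_bdd hv_eq
end

section
/- Let f : [0,∞) → [0,∞) be a bounded Borel function vanishing outside a compact set. Then ∑_{k=1}^∞ ∫_0^T φ^{*k}(s) ds < ∞ for every T ≥ 0, the function h(t) := f(t) + ∑_{k=1}^∞ ∫_0^∞ f(t+s) φ^{*k}(s) ds is finite and bounded, and h satisfies the renewal equation h(t) = f(t) + ∫_0^∞ h(t+s) φ(s) ds for all t ≥ 0. -/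
/-!
Let `ν` be the law with density `φ` and `Sₖ` the partial sums of an i.i.d. `ν`-sequence. Everything
rests on a uniform bound for the renewal measure of short intervals:
`∑ₖ P(Sₖ ∈ [a, a + c]) ≤ C(c)` for all `a`. To prove it, weight `[a, ∞)` by `e^{a - x}`: the
discounted masses `Vₖ(a)` of `ν^{∗(k+1)}` satisfy `Vₖ₊₁(a) ≤ L Vₖ(a) + P(Sₖ < a ≤ Sₖ₊₁)` with
`L = ∫ e^{-x} dν < 1`, because `ν` lives on `(0, ∞)`. The crossing probabilities of a fixed level
sum to at most `1`, so `∑ₖ Vₖ(a) ≤ 2 / (1 - L)`, and `P(Sₖ ∈ [a, a + c]) ≤ e^c Vₖ(a)`.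
The renewal equation is `ν^{∗(k+2)} = ν ∗ ν^{∗(k+1)}` summed over `k`; it is proved for
`ℝ≥0∞`-valued integrals, where no integrability side conditions arise, and only then read off
for the real integrals of the statement.
-/

set_option autoImplicit false

open MeasureTheory Filter Set

/-- `convIter φ k` is the `(k+1)`-fold convolution `φ^{*(k+1)}` of `φ`. -/
noncomputable def convIter (φ : ℝ → ℝ) : ℕ → ℝ → ℝ
  | 0 => φ
  | n + 1 => fun x => ∫ s, convIter φ n s * φ (x - s)

open Real Measure
open scoped ENNReal NNReal

/-- `iterConv ν k = ν^{∗(k+1)}`, indexed like `convIter`. -/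
noncomputable def iterConv (ν : Measure ℝ) : ℕ → Measure ℝ
  | 0 => ν
  | k + 1 => iterConv ν k ∗ ν

lemma iterConv_succ (ν : Measure ℝ) (k : ℕ) : iterConv ν (k + 1) = iterConv ν k ∗ ν := rfl

noncomputable def laplaceOne (ν : Measure ℝ) : ℝ≥0∞ := ∫⁻ x, ENNReal.ofReal (exp (-x)) ∂ν

noncomputable def discountedTail (μ : Measure ℝ) (a : ℝ) : ℝ≥0∞ :=
  ∫⁻ x in Ici a, ENNReal.ofReal (exp (a - x)) ∂μ

def levelCrossing (a : ℝ) : Set (ℝ × ℝ) := {p | p.1 < a ∧ a ≤ p.1 + p.2}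

noncomputable def renewalSum (ν : Measure ℝ) (F : ℝ → ℝ≥0∞) (t : ℝ) : ℝ≥0∞ :=
  ∑' k, ∫⁻ s, F (t + s) ∂iterConv ν k

noncomputable abbrev densityMeasure (φ : ℝ → ℝ) : Measure ℝ :=
  volume.withDensity fun x => ENNReal.ofReal (φ x)

lemma ENNReal.inv_one_sub_eq_one_add_mul (L : ℝ≥0∞) : (1 - L)⁻¹ = 1 + L * (1 - L)⁻¹ := by
  rw [← ENNReal.tsum_geometric_add_one, ← ENNReal.tsum_geometric,
    tsum_eq_zero_add' ENNReal.summable, pow_zero]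

lemma measurableSet_levelCrossing (a : ℝ) : MeasurableSet (levelCrossing a) :=
  (measurableSet_lt measurable_fst measurable_const).inter
    (measurableSet_le measurable_const (measurable_fst.add measurable_snd))

lemma measure_Icc_le_exp_mul_discountedTail (μ : Measure ℝ) (a c : ℝ) :
    μ (Icc a (a + c)) ≤ ENNReal.ofReal (exp c) * discountedTail μ a := by
  rw [discountedTail, ← lintegral_const_mul' _ _ ENNReal.ofReal_ne_top, ← setLIntegral_one]
  calc ∫⁻ _ in Icc a (a + c), 1 ∂μ
      ≤ ∫⁻ x in Icc a (a + c), ENNReal.ofReal (exp c) * ENNReal.ofReal (exp (a - x)) ∂μ := by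
        refine setLIntegral_mono' measurableSet_Icc fun x hx => ?_
        rw [← ENNReal.ofReal_mul (exp_nonneg c), ← exp_add, ENNReal.one_le_ofReal, one_le_exp_iff]
        linarith [hx.2]
    _ ≤ _ := lintegral_mono_set Icc_subset_Ici_self

lemma discountedTail_le_measure_univ (μ : Measure ℝ) (a : ℝ) : discountedTail μ a ≤ μ univ := by
  rw [← setLIntegral_one]
  calc discountedTail μ a ≤ ∫⁻ _ in Ici a, 1 ∂μ :=
        setLIntegral_mono' measurableSet_Ici fun x hx => by
          rw [ENNReal.ofReal_le_one, exp_le_one_iff]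
          linarith [mem_Ici.1 hx]
    _ ≤ _ := lintegral_mono_set (subset_univ _)

section Convolution

variable {μ ν : Measure ℝ}

lemma discountedTail_conv_le [SFinite ν] (hν : ∀ᵐ y ∂ν, 0 ≤ y) (a : ℝ) :
    discountedTail (μ ∗ ν) a ≤
      discountedTail μ a * laplaceOne ν + μ.prod ν (levelCrossing a) := by
  set w : ℝ → ℝ≥0∞ := (Ici a).indicator fun x => ENNReal.ofReal (exp (a - x))
  have hw : Measurable w := Measurable.indicator (by fun_prop) measurableSet_Ici
  -- If `p.1 ≥ a` the weight factorises; otherwise it is at most `1`, and nonzero only if `p`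
  -- crosses level `a`.
  have hsplit : ∀ᵐ p ∂μ.prod ν, w (p.1 + p.2) ≤
      w p.1 * ENNReal.ofReal (exp (-p.2)) + (levelCrossing a).indicator 1 p := by
    filter_upwards [quasiMeasurePreserving_snd.ae hν] with p hp
    by_cases h1 : a ≤ p.1
    · have h2 : a ≤ p.1 + p.2 := by linarith
      simp only [w, indicator_of_mem (mem_Ici.2 h1), indicator_of_mem (mem_Ici.2 h2)]
      rw [← ENNReal.ofReal_mul (exp_nonneg _), ← exp_add, sub_add_eq_sub_sub, sub_eq_add_neg]
      exact le_self_add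
    · by_cases h2 : a ≤ p.1 + p.2
      · have hcross : p ∈ levelCrossing a := ⟨not_le.1 h1, h2⟩
        simp only [w, indicator_of_mem (mem_Ici.2 h2), indicator_of_mem hcross, Pi.one_apply]
        refine le_add_left (ENNReal.ofReal_le_one.2 (exp_le_one_iff.2 ?_))
        linarith
      · simp [w, indicator_of_notMem (show p.1 + p.2 ∉ Ici a from h2)]
  calc discountedTail (μ ∗ ν) a = ∫⁻ p, w (p.1 + p.2) ∂μ.prod ν := by
        rw [discountedTail, ← lintegral_indicator measurableSet_Ici, conv,
          lintegral_map hw measurable_add]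
    _ ≤ ∫⁻ p, w p.1 * ENNReal.ofReal (exp (-p.2)) + (levelCrossing a).indicator 1 p ∂μ.prod ν :=
        lintegral_mono_ae hsplit
    _ = discountedTail μ a * laplaceOne ν + μ.prod ν (levelCrossing a) := by
        rw [lintegral_add_left (by fun_prop),
          lintegral_prod_mul (g := fun y => ENNReal.ofReal (exp (-y))) hw.aemeasurable
            (by fun_prop),
          lintegral_indicator_one (measurableSet_levelCrossing a),
          lintegral_indicator measurableSet_Ici]
        rfl

lemma measure_Iio_eq_levelCrossing_add_conv [IsProbabilityMeasure ν] (hν : ∀ᵐ y ∂ν, 0 ≤ y)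
    (a : ℝ) : μ (Iio a) = μ.prod ν (levelCrossing a) + (μ ∗ ν) (Iio a) := by
  have hbelow : (μ ∗ ν) (Iio a) = μ.prod ν {p | p.1 < a ∧ p.1 + p.2 < a} := by
    rw [conv, map_apply (by fun_prop) measurableSet_Iio]
    refine measure_congr (eventuallyEq_set.2 ?_)
    filter_upwards [quasiMeasurePreserving_snd.ae hν] with p hp
    simp only [mem_preimage, mem_Iio]
    exact ⟨fun h => ⟨by linarith, h⟩, fun h => h.2⟩
  have hsplit : Iio a ×ˢ univ = levelCrossing a ∪ {p : ℝ × ℝ | p.1 < a ∧ p.1 + p.2 < a} := by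
    ext p
    simp only [levelCrossing, mem_prod, mem_Iio, mem_univ, and_true, mem_union, mem_ofPred_eq]
    constructor
    · intro h; by_cases h' : a ≤ p.1 + p.2 <;> simp_all
    · rintro (h | h) <;> exact h.1
  have hmeas : MeasurableSet {p : ℝ × ℝ | p.1 < a ∧ p.1 + p.2 < a} :=
    (measurableSet_lt measurable_fst measurable_const).inter
      (measurableSet_lt (measurable_fst.add measurable_snd) measurable_const)
  rw [hbelow, ← measure_union (disjoint_left.2 fun p h1 h2 => (not_lt.2 h1.2) h2.2) hmeas,
    ← hsplit, prod_prod, measure_univ, mul_one]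

end Convolution

lemma ae_pos_iterConv {ν : Measure ℝ} (hν : ∀ᵐ x ∂ν, 0 < x) (k : ℕ) :
    ∀ᵐ x ∂iterConv ν k, 0 < x := by
  induction k with
  | zero => exact hν
  | succ k ih =>
    refine (ae_map_iff measurable_add.aemeasurable measurableSet_Ioi).2 ?_
    filter_upwards [quasiMeasurePreserving_fst.ae ih, quasiMeasurePreserving_snd.ae hν]
      with p h1 h2
    exact add_pos h1 h2

section Renewal

variable {ν : Measure ℝ} [IsProbabilityMeasure ν]

instance isProbabilityMeasure_iterConv (k : ℕ) : IsProbabilityMeasure (iterConv ν k) := by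
  induction k with
  | zero => assumption
  | succ k _ => dsimp only [iterConv]; infer_instance

lemma laplaceOne_lt_one (hν : ∀ᵐ x ∂ν, 0 < x) : laplaceOne ν < 1 := by
  have hlt : ∀ᵐ x ∂ν, ENNReal.ofReal (exp (-x)) < 1 :=
    hν.mono fun x hx => ENNReal.ofReal_lt_one.2 (exp_lt_one_iff.2 (neg_neg_of_pos hx))
  have hfin : laplaceOne ν ≠ ∞ := ne_top_of_le_ne_top (measure_ne_top ν univ)
    ((lintegral_mono_ae (hlt.mono fun _ hx => hx.le)).trans_eq lintegral_one)
  exact (lintegral_strict_mono (IsProbabilityMeasure.ne_zero ν) aemeasurable_const hfin hlt).trans_eq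
    (by simp)

lemma sum_range_levelCrossing_le_one (hν : ∀ᵐ x ∂ν, 0 ≤ x) (a : ℝ) (n : ℕ) :
    ∑ k ∈ Finset.range n, (iterConv ν k).prod ν (levelCrossing a) ≤ 1 := by
  have htelescope : ∀ n, ∑ k ∈ Finset.range n, (iterConv ν k).prod ν (levelCrossing a)
      + iterConv ν n (Iio a) = ν (Iio a) := by
    intro n
    induction n with
    | zero => simp [iterConv]
    | succ n ih =>
      rw [Finset.sum_range_succ, add_assoc, iterConv_succ,
        ← measure_Iio_eq_levelCrossing_add_conv hν, ih]
  exact (le_self_add.trans (htelescope n).le).trans prob_le_one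

lemma sum_range_discountedTail_iterConv_le (hν : ∀ᵐ x ∂ν, 0 < x) (a : ℝ) (n : ℕ) :
    ∑ k ∈ Finset.range n, discountedTail (iterConv ν k) a ≤ 2 * (1 - laplaceOne ν)⁻¹ := by
  have hν' : ∀ᵐ x ∂ν, 0 ≤ x := hν.mono fun x hx => hx.le
  set C := 2 * (1 - laplaceOne ν)⁻¹
  have hC : 2 + C * laplaceOne ν = C := by
    simp only [C]
    conv_rhs => rw [ENNReal.inv_one_sub_eq_one_add_mul]
    ring
  induction n with
  | zero => simp
  | succ n ih =>
    calc ∑ k ∈ Finset.range (n + 1), discountedTail (iterConv ν k) a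
        = discountedTail ν a + ∑ k ∈ Finset.range n, discountedTail (iterConv ν k ∗ ν) a := by
          rw [Finset.sum_range_succ', add_comm]; rfl
      _ ≤ 1 + ∑ k ∈ Finset.range n, (discountedTail (iterConv ν k) a * laplaceOne ν
            + (iterConv ν k).prod ν (levelCrossing a)) := by
          gcongr with k
          · exact (discountedTail_le_measure_univ ν a).trans_eq measure_univ
          · exact discountedTail_conv_le hν' a
      _ ≤ 1 + (C * laplaceOne ν + 1) := by
          rw [Finset.sum_add_distrib, ← Finset.sum_mul]
          gcongr
          exact sum_range_levelCrossing_le_one hν' a n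
      _ = 2 + C * laplaceOne ν := by ring
      _ = C := hC

lemma exists_tsum_iterConv_Icc_le (hν : ∀ᵐ x ∂ν, 0 < x) (c : ℝ) :
    ∃ C : ℝ≥0, ∀ a, ∑' k, iterConv ν k (Icc a (a + c)) ≤ C := by
  have hC : ENNReal.ofReal (exp c) * (2 * (1 - laplaceOne ν)⁻¹) ≠ ∞ :=
    ENNReal.mul_ne_top ENNReal.ofReal_ne_top (ENNReal.mul_ne_top ENNReal.ofNat_ne_top
      (ENNReal.inv_ne_top.2 (tsub_pos_of_lt (laplaceOne_lt_one hν)).ne'))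
  refine ⟨(ENNReal.ofReal (exp c) * (2 * (1 - laplaceOne ν)⁻¹)).toNNReal, fun a => ?_⟩
  rw [ENNReal.coe_toNNReal hC]
  calc ∑' k, iterConv ν k (Icc a (a + c))
      ≤ ∑' k, ENNReal.ofReal (exp c) * discountedTail (iterConv ν k) a :=
        ENNReal.tsum_le_tsum fun k => measure_Icc_le_exp_mul_discountedTail _ a c
    _ ≤ _ := by
        rw [ENNReal.tsum_mul_left]
        gcongr
        exact ENNReal.tsum_le_of_sum_range_le (sum_range_discountedTail_iterConv_le hν a)

lemma exists_renewalSum_le (hν : ∀ᵐ x ∂ν, 0 < x) {F : ℝ → ℝ≥0∞} {M : ℝ≥0}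
    (hFM : ∀ x, F x ≤ M) {b : ℝ} (hFb : ∀ x ∉ Icc 0 b, F x = 0) :
    ∃ C : ℝ≥0, ∀ t, renewalSum ν F t ≤ C := by
  obtain ⟨C, hC⟩ := exists_tsum_iterConv_Icc_le hν b
  refine ⟨M * C, fun t => ?_⟩
  have hwindow : ∀ s, F (t + s) ≤ (Icc (-t) (-t + b)).indicator (fun _ => (M : ℝ≥0∞)) s := by
    intro s
    by_cases hs : s ∈ Icc (-t) (-t + b)
    · rw [indicator_of_mem hs]; exact hFM _
    · rw [hFb (t + s) fun h => hs ⟨by linarith [h.1], by linarith [h.2]⟩]; exact zero_le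
  rw [ENNReal.coe_mul]
  calc renewalSum ν F t ≤ ∑' k, (M : ℝ≥0∞) * iterConv ν k (Icc (-t) (-t + b)) :=
        ENNReal.tsum_le_tsum fun k => (lintegral_mono hwindow).trans_eq
          (lintegral_indicator_const measurableSet_Icc _)
    _ ≤ M * C := by
        rw [ENNReal.tsum_mul_left]
        gcongr
        exact hC _

lemma measurable_lintegral_comp_add {μ : Measure ℝ} [SFinite μ] {F : ℝ → ℝ≥0∞}
    (hF : Measurable F) : Measurable fun t => ∫⁻ s, F (t + s) ∂μ :=
  (hF.comp measurable_add).lintegral_prod_right'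

lemma measurable_renewalSum {F : ℝ → ℝ≥0∞} (hF : Measurable F) : Measurable (renewalSum ν F) :=
  Measurable.tsum fun _ => measurable_lintegral_comp_add hF

lemma lintegral_add_renewalSum {F : ℝ → ℝ≥0∞} (hF : Measurable F) (t : ℝ) :
    ∫⁻ s, (F (t + s) + renewalSum ν F (t + s)) ∂ν = renewalSum ν F t := by
  have hstep : ∀ k, ∫⁻ s, ∫⁻ x, F (t + s + x) ∂iterConv ν k ∂ν
      = ∫⁻ s, F (t + s) ∂iterConv ν (k + 1) := by
    intro k
    rw [iterConv_succ, conv_comm, lintegral_conv (f := fun z => F (t + z)) (by fun_prop)]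
    simp only [add_assoc]
  have hmeas : ∀ k, AEMeasurable (fun s => ∫⁻ x, F (t + s + x) ∂iterConv ν k) ν := fun k =>
    ((measurable_lintegral_comp_add hF).comp (measurable_const_add t)).aemeasurable
  rw [lintegral_add_left (f := fun s => F (t + s)) (by fun_prop)]
  conv_rhs => rw [renewalSum, tsum_eq_zero_add' ENNReal.summable]
  congr 1
  unfold renewalSum
  rw [lintegral_tsum hmeas]
  exact tsum_congr hstep

end Renewal

lemma convIter_nonneg {φ : ℝ → ℝ} (hφ : ∀ x, 0 ≤ φ x) : ∀ k x, 0 ≤ convIter φ k x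
  | 0, x => hφ x
  | k + 1, _ => integral_nonneg fun s => mul_nonneg (convIter_nonneg hφ k s) (hφ _)

lemma measurable_convIter {φ : ℝ → ℝ} (hφ : Measurable φ) : ∀ k, Measurable (convIter φ k)
  | 0 => hφ
  | k + 1 => by
    have hprod : Measurable fun p : ℝ × ℝ => convIter φ k p.2 * φ (p.1 - p.2) :=
      ((measurable_convIter hφ k).comp measurable_snd).mul (hφ.comp (by fun_prop))
    exact hprod.stronglyMeasurable.integral_prod_right'.measurable

lemma setIntegral_mul_eq_toReal_setLIntegral_withDensity {α : Type*} [MeasurableSpace α]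
    {μ : Measure α} {g ρ : α → ℝ} (hg : Measurable g) (hg0 : ∀ x, 0 ≤ g x) (hρ : Measurable ρ)
    (hρ0 : ∀ x, 0 ≤ ρ x) {s : Set α} (hs : MeasurableSet s) :
    ∫ x in s, g x * ρ x ∂μ =
      (∫⁻ x in s, ENNReal.ofReal (g x) ∂μ.withDensity fun x => ENNReal.ofReal (ρ x)).toReal := by
  rw [integral_eq_lintegral_of_nonneg_ae (ae_of_all _ fun x => mul_nonneg (hg0 x) (hρ0 x))
      (hg.mul hρ).aestronglyMeasurable,
    setLIntegral_withDensity_eq_setLIntegral_mul _ (by fun_prop) (by fun_prop) hs]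
  simp only [Pi.mul_apply, ENNReal.ofReal_mul (hg0 _), mul_comm]

lemma ae_pos_densityMeasure {φ : ℝ → ℝ} (hφ : ∀ t < 0, φ t = 0) :
    ∀ᵐ x ∂densityMeasure φ, 0 < x := by
  have hIic : {x : ℝ | ¬ 0 < x} = Iic 0 := by ext; simp
  rw [ae_iff, hIic, withDensity_apply _ measurableSet_Iic, ← setLIntegral_congr Iio_ae_eq_Iic,
    setLIntegral_congr_fun (g := fun _ => 0) measurableSet_Iio fun x hx => by simp [hφ x hx]]
  exact lintegral_zero

lemma isProbabilityMeasure_densityMeasure {φ : ℝ → ℝ} (hφm : Measurable φ)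
    (hφ0 : ∀ t, 0 ≤ φ t) (hφ : ∀ t < 0, φ t = 0) (hφ1 : ∫ t in Ioi 0, φ t = 1) :
    IsProbabilityMeasure (densityMeasure φ) := by
  have hIoi : ∫⁻ t in Ioi 0, ENNReal.ofReal (φ t) = 1 := by
    rw [← ENNReal.toReal_eq_one_iff, ← hφ1,
      integral_eq_lintegral_of_nonneg_ae (ae_of_all _ hφ0) hφm.aestronglyMeasurable]
  constructor
  rw [← restrict_eq_self_of_ae_mem (s := Ioi 0) (ae_pos_densityMeasure hφ), restrict_apply_univ,
    withDensity_apply _ measurableSet_Ioi, hIoi]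

lemma iterConv_densityMeasure {φ : ℝ → ℝ} (hφ : Measurable φ) (hφ0 : ∀ x, 0 ≤ φ x)
    [IsProbabilityMeasure (densityMeasure φ)] (k : ℕ) :
    iterConv (densityMeasure φ) k = densityMeasure (convIter φ k) := by
  induction k with
  | zero => rfl
  | succ k ih =>
    set ρ : ℝ → ℝ≥0∞ := fun x => ENNReal.ofReal (convIter φ k x)
    set g : ℝ → ℝ≥0∞ := fun x => ENNReal.ofReal (φ x)
    have hρ : Measurable ρ := (measurable_convIter hφ k).ennreal_ofReal
    have hg : Measurable g := hφ.ennreal_ofReal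
    have hconv : iterConv (volume.withDensity g) (k + 1) = volume.withDensity (ρ ⋆ₗ g) := by
      rw [iterConv_succ, ih, conv_withDensity_eq_lconvolution hρ hg]
    -- The Bochner integral defining `convIter φ (k + 1) x` agrees with `(ρ ⋆ₗ g) x` only where
    -- the latter is finite, which is almost everywhere since it has total mass one.
    have hfin : ∀ᵐ x, (ρ ⋆ₗ g) x < ∞ := by
      refine ae_lt_top (measurable_lconvolution _ hρ hg) ?_
      rw [← setLIntegral_univ, ← withDensity_apply _ MeasurableSet.univ, ← hconv, measure_univ]
      exact ENNReal.one_ne_top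
    rw [hconv]
    refine withDensity_congr_ae (hfin.mono fun x hx => ?_)
    have hint : ∫ s, convIter φ k s * φ (x - s) = ((ρ ⋆ₗ g) x).toReal := by
      rw [integral_eq_lintegral_of_nonneg_ae
        (ae_of_all _ fun s => mul_nonneg (convIter_nonneg hφ0 k s) (hφ0 _))
        ((measurable_convIter hφ k).mul (hφ.comp (by fun_prop))).aestronglyMeasurable,
        lconvolution_def]
      simp only [ρ, g, ENNReal.ofReal_mul (convIter_nonneg hφ0 k _), neg_add_eq_sub]
    change _ = ENNReal.ofReal (∫ s, convIter φ k s * φ (x - s))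
    rw [hint, ENNReal.ofReal_toReal hx.ne]

lemma summable_setIntegral_convIter {φ : ℝ → ℝ} (hφm : Measurable φ) (hφ0 : ∀ x, 0 ≤ φ x)
    (hφ : ∀ t < 0, φ t = 0) [IsProbabilityMeasure (densityMeasure φ)] {s : Set ℝ}
    (hs : MeasurableSet s) {a c : ℝ} (hsub : s ⊆ Icc a (a + c)) :
    Summable fun k => ∫ x in s, convIter φ k x := by
  have hint : ∀ k, ∫ x in s, convIter φ k x = (iterConv (densityMeasure φ) k s).toReal := by
    intro k
    have h := setIntegral_mul_eq_toReal_setLIntegral_withDensity (μ := volume) (g := fun _ => 1)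
      measurable_const (fun _ => zero_le_one) (measurable_convIter hφm k) (convIter_nonneg hφ0 k) hs
    simp only [one_mul, ENNReal.ofReal_one, setLIntegral_one] at h
    rw [h, iterConv_densityMeasure hφm hφ0]
  obtain ⟨C, hC⟩ := exists_tsum_iterConv_Icc_le (ae_pos_densityMeasure hφ) c
  simp_rw [hint]
  exact ENNReal.summable_toReal (ne_top_of_le_ne_top (ENNReal.coe_ne_top (r := C))
    ((ENNReal.tsum_le_tsum fun k => measure_mono hsub).trans (hC a)))

lemma setIntegral_Ioi_mul_convIter {φ : ℝ → ℝ} (hφm : Measurable φ) (hφ0 : ∀ x, 0 ≤ φ x)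
    (hφ : ∀ t < 0, φ t = 0) [IsProbabilityMeasure (densityMeasure φ)] {g : ℝ → ℝ}
    (hg : Measurable g) (hg0 : ∀ x, 0 ≤ g x) (k : ℕ) :
    ∫ s in Ioi 0, g s * convIter φ k s =
      (∫⁻ s, ENNReal.ofReal (g s) ∂iterConv (densityMeasure φ) k).toReal := by
  have hpos := ae_pos_iterConv (ae_pos_densityMeasure hφ) k
  rw [iterConv_densityMeasure hφm hφ0] at hpos ⊢
  rw [setIntegral_mul_eq_toReal_setLIntegral_withDensity hg hg0 (measurable_convIter hφm k)
    (convIter_nonneg hφ0 k) measurableSet_Ioi, restrict_eq_self_of_ae_mem (s := Ioi 0) hpos]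

lemma setIntegral_Ioi_add_toReal_renewalSum_mul {φ : ℝ → ℝ} (hφm : Measurable φ)
    (hφ0 : ∀ x, 0 ≤ φ x) (hφ : ∀ t < 0, φ t = 0) [IsProbabilityMeasure (densityMeasure φ)]
    {f : ℝ → ℝ} (hf : Measurable f) (hf0 : ∀ x, 0 ≤ f x)
    (hR : ∀ t, renewalSum (densityMeasure φ) (fun x => ENNReal.ofReal (f x)) t ≠ ∞) (t : ℝ) :
    ∫ s in Ioi 0, (f (t + s) +
        (renewalSum (densityMeasure φ) (fun x => ENNReal.ofReal (f x)) (t + s)).toReal) * φ s =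
      (renewalSum (densityMeasure φ) (fun x => ENNReal.ofReal (f x)) t).toReal := by
  have hg : Measurable fun s =>
      f (t + s) + (renewalSum (densityMeasure φ) (fun x => ENNReal.ofReal (f x)) (t + s)).toReal :=
    (hf.comp (measurable_const_add t)).add
      ((measurable_renewalSum hf.ennreal_ofReal).comp (measurable_const_add t)).ennreal_toReal
  have h := setIntegral_Ioi_mul_convIter hφm hφ0 hφ hg
    (fun s => add_nonneg (hf0 _) ENNReal.toReal_nonneg) 0
  simp only [convIter, iterConv] at h
  rw [h, ← lintegral_add_renewalSum hf.ennreal_ofReal t]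
  congr 2
  funext s
  rw [ENNReal.ofReal_add (hf0 _) ENNReal.toReal_nonneg, ENNReal.ofReal_toReal (hR _)]

/-- for `f : [0,∞) → [0,∞)` bounded Borel with compact
support, `∑_{k=1}^∞ ∫_0^T φ^{*k}(s) ds < ∞` for every `T ≥ 0`, the function
`h(t) = f(t) + ∑_{k=1}^∞ ∫_0^∞ f(t+s) φ^{*k}(s) ds` is finite (the series
converges) and bounded, and it satisfies the renewal equation
`h(t) = f(t) + ∫_0^∞ h(t+s) φ(s) ds` for all `t ≥ 0`. -/
theorem stmt19
    (φ : ℝ → ℝ) (hφ_meas : Measurable φ) (hφ_nonneg : ∀ t, 0 ≤ φ t)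
    (hφ_zero : ∀ t < 0, φ t = 0)
    (hφ_int : ∫ t in Set.Ioi (0 : ℝ), φ t = 1)
    (f : ℝ → ℝ) (hf_meas : Measurable f) (hf_nonneg : ∀ t, 0 ≤ f t)
    (hf_bdd : ∃ M, ∀ t, f t ≤ M)
    (hf_supp : ∃ b : ℝ, ∀ t, t ∉ Icc (0 : ℝ) b → f t = 0) :
    (∀ T ≥ (0 : ℝ),
      Summable (fun k : ℕ => ∫ s in Set.Ioc (0 : ℝ) T, convIter φ k s)) ∧
    (∀ t : ℝ, Summable
      (fun k : ℕ => ∫ s in Set.Ioi (0 : ℝ), f (t + s) * convIter φ k s)) ∧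
    (∀ h : ℝ → ℝ,
      (∀ t, h t = f t +
        ∑' k : ℕ, ∫ s in Set.Ioi (0 : ℝ), f (t + s) * convIter φ k s) →
      (∃ M, ∀ t, |h t| ≤ M) ∧
      (∀ t ≥ (0 : ℝ), h t = f t + ∫ s in Set.Ioi (0 : ℝ), h (t + s) * φ s)) := by
  obtain ⟨M, hM⟩ := hf_bdd
  obtain ⟨b, hb⟩ := hf_supp
  have := isProbabilityMeasure_densityMeasure hφ_meas hφ_nonneg hφ_zero hφ_int
  set R := renewalSum (densityMeasure φ) fun x => ENNReal.ofReal (f x)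
  obtain ⟨C, hC⟩ := exists_renewalSum_le (ae_pos_densityMeasure hφ_zero) (M := M.toNNReal)
    (b := b) (fun x => ENNReal.ofReal_le_ofReal (hM x)) fun x hx => by simp [hb x hx]
  have hR : ∀ t, R t ≠ ∞ := fun t => ne_top_of_le_ne_top ENNReal.coe_ne_top (hC t)
  have hterm : ∀ t k, ∫ s in Ioi 0, f (t + s) * convIter φ k s =
      (∫⁻ s, ENNReal.ofReal (f (t + s)) ∂iterConv (densityMeasure φ) k).toReal := fun t k =>
    setIntegral_Ioi_mul_convIter hφ_meas hφ_nonneg hφ_zero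
      (hf_meas.comp (measurable_const_add t)) (fun _ => hf_nonneg _) k
  have hsum : ∀ t, ∑' k, ∫ s in Ioi 0, f (t + s) * convIter φ k s = (R t).toReal := fun t => by
    simp_rw [hterm t]
    exact (ENNReal.tsum_toReal_eq fun k => ENNReal.ne_top_of_tsum_ne_top (hR t) k).symm
  refine ⟨fun T _ => ?_, fun t => ?_, fun h hh => ⟨⟨M + C, fun t => ?_⟩, fun t _ => ?_⟩⟩
  · exact summable_setIntegral_convIter hφ_meas hφ_nonneg hφ_zero measurableSet_Ioc
      (a := 0) (c := T) (by rw [zero_add]; exact Ioc_subset_Icc_self)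
  · simp_rw [hterm t]
    exact ENNReal.summable_toReal (hR t)
  · rw [hh, hsum, abs_of_nonneg (add_nonneg (hf_nonneg t) ENNReal.toReal_nonneg)]
    exact add_le_add (hM t) (ENNReal.toReal_le_coe_of_le_coe (hC t))
  · simp_rw [hh, hsum]
    rw [setIntegral_Ioi_add_toReal_renewalSum_mul hφ_meas hφ_nonneg hφ_zero hf_meas hf_nonneg hR]
end
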